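/- arXiv:2509.25869 — 5 statements merged into one kernel-verified Lean document; each statement's English description precedes it below -/
import Mathlib

section
/- For every complex number z, if S = {x ∈ ℂ : Re(x) ≥ 1/2} and χ_S denotes the characteristic function of S, then |χ_S(z) − z| ≤ 2|z² − z|. -/
/-! Since `z² - z = z (z - 1)`, it suffices that the factor not being subtracted has norm at
least `1/2`: for `Re z ≥ 1/2` this is `‖z‖ ≥ Re z`, and for `Re z < 1/2` it is
`‖z - 1‖ ≥ Re (1 - z) > 1/2`. -/

lemma le_two_mul_mul_of_half_le {a b : ℝ} (ha : 1 / 2 ≤ a) (hb : 0 ≤ b) : b ≤ 2 * (a * b) := by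
  nlinarith

lemma Complex.half_le_norm_of_half_le_re {z : ℂ} (h : 1 / 2 ≤ z.re) : 1 / 2 ≤ ‖z‖ :=
  h.trans (Complex.re_le_norm z)

lemma Complex.half_le_norm_sub_one_of_re_lt_half {z : ℂ} (h : z.re < 1 / 2) :
    1 / 2 ≤ ‖z - 1‖ := by
  have hre : (1 - z).re = 1 - z.re := by simp
  rw [norm_sub_rev]
  linarith [Complex.re_le_norm (1 - z)]

theorem stmt0 (z : ℂ) :
    ‖(if (1/2 : ℝ) ≤ z.re then (1 : ℂ) else 0) - z‖ ≤
      2 * ‖z ^ 2 - z‖ := by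
  rw [show z ^ 2 - z = z * (z - 1) by ring, norm_mul]
  split_ifs with h
  · rw [norm_sub_rev]
    exact le_two_mul_mul_of_half_le (Complex.half_le_norm_of_half_le_re h) (norm_nonneg _)
  · rw [zero_sub, norm_neg, mul_comm ‖z‖]
    exact le_two_mul_mul_of_half_le
      (Complex.half_le_norm_sub_one_of_re_lt_half (not_le.mp h)) (norm_nonneg _)
end

section
/- Let A be a unital Banach algebra, a ∈ A with ‖a² − a‖ < 1/4, and let r satisfy 2‖a² − a‖ < r < 1/2. Then for every z on the circles of radius r centered at 0 and at 1, z − a is invertible and the spectrum of a is contained in the union of the open disks of radius r about 0 and 1. -/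
/-!
The polynomial spectral mapping inclusion puts `z ^ 2 - z` in the spectrum of `a ^ 2 - a` whenever
`z` lies in the spectrum of `a`, so `|z| |z - 1| = |z ^ 2 - z| ≤ ‖a ^ 2 - a‖ < r / 2`. On the other
hand, if `|z| ≥ r` and `|z - 1| ≥ r` then `|z| + |z - 1| ≥ 1` forces `|z| |z - 1| ≥ r (1 - r) > r / 2`.
Points on either circle satisfy both lower bounds, since `r < 1 - r`.
-/

open Polynomial

lemma one_le_norm_add_norm_sub_one {R : Type*} [SeminormedRing R] [NormOneClass R] (z : R) :
    1 ≤ ‖z‖ + ‖z - 1‖ := by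
  simpa using norm_sub_le z (z - 1)

lemma mul_one_sub_le_norm_mul_norm_sub_one {R : Type*} [SeminormedRing R] [NormOneClass R]
    {z : R} {r : ℝ} (h₀ : r ≤ ‖z‖) (h₁ : r ≤ ‖z - 1‖) : r * (1 - r) ≤ ‖z‖ * ‖z - 1‖ := by
  have hsum := one_le_norm_add_norm_sub_one z
  rcases le_or_gt 0 r with hr | hr
  · nlinarith [mul_nonneg (sub_nonneg.2 h₀) (sub_nonneg.2 h₁)]
  · nlinarith [mul_nonneg (norm_nonneg z) (norm_nonneg (z - 1))]

section NormedAlgebra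

variable {𝕜 A : Type*} [NormedField 𝕜] [NormedRing A] [NormedAlgebra 𝕜 A] [CompleteSpace A]

/-- Unlike `spectrum.mem_resolventSet_of_norm_lt`, this needs no `NormOneClass A`:
`↑ₐk - a = k • (1 - k⁻¹ • a)` and the Neumann series inverts the second factor. -/
lemma mem_resolventSet_of_norm_lt_norm {a : A} {k : 𝕜} (h : ‖a‖ < ‖k‖) :
    k ∈ resolventSet 𝕜 a := by
  have hk : k ≠ 0 := norm_pos_iff.1 ((norm_nonneg a).trans_lt h)
  have hsmall : ‖k⁻¹ • a‖ < 1 := by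
    rw [norm_smul, norm_inv, inv_mul_lt_one₀ (norm_pos_iff.2 hk)]
    exact h
  have hfactor : algebraMap 𝕜 A k - a = algebraMap 𝕜 A k * (1 - k⁻¹ • a) := by
    rw [← Algebra.smul_def, smul_sub, smul_inv_smul₀ hk, Algebra.algebraMap_eq_smul_one]
  rw [resolventSet, Set.mem_ofPred_eq, hfactor]
  exact ((isUnit_iff_ne_zero.2 hk).map (algebraMap 𝕜 A)).mul (Units.oneSub _ hsmall).isUnit

lemma notMem_spectrum_of_norm_sq_sub_lt {a : A} {z : 𝕜} (h : ‖a ^ 2 - a‖ < ‖z ^ 2 - z‖) :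
    z ∉ spectrum 𝕜 a := by
  intro hz
  have hmap := spectrum.subset_polynomial_aeval a (X ^ 2 - X) ⟨z, hz, rfl⟩
  simp only [eval_sub, eval_pow, eval_X, map_sub, map_pow, aeval_X] at hmap
  exact hmap (mem_resolventSet_of_norm_lt_norm h)

end NormedAlgebra

theorem stmt6_general {A : Type*} [NormedRing A] [NormedAlgebra ℂ A] [CompleteSpace A]
    (a : A) (r : ℝ)
    (hr1 : 2 * ‖a ^ 2 - a‖ < r) (hr2 : r < 1/2) :
    (∀ z : ℂ, (‖z‖ = r ∨ ‖z - 1‖ = r) →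
        IsUnit (algebraMap ℂ A z - a)) ∧
      spectrum ℂ a ⊆ Metric.ball (0 : ℂ) r ∪ Metric.ball (1 : ℂ) r := by
  have hnot : ∀ z : ℂ, r ≤ ‖z‖ → r ≤ ‖z - 1‖ → z ∉ spectrum ℂ a := by
    intro z h₀ h₁
    refine notMem_spectrum_of_norm_sq_sub_lt ?_
    calc ‖a ^ 2 - a‖ < r * (1 - r) := by nlinarith [norm_nonneg (a ^ 2 - a)]
      _ ≤ ‖z‖ * ‖z - 1‖ := mul_one_sub_le_norm_mul_norm_sub_one h₀ h₁
      _ = ‖z ^ 2 - z‖ := by rw [← norm_mul]; ring_nf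
  constructor
  · intro z hz
    have hsum := one_le_norm_add_norm_sub_one z
    refine spectrum.notMem_iff.1 (hnot z ?_ ?_) <;> rcases hz with hz | hz <;> linarith
  · intro z hz
    by_contra hout
    simp only [Set.mem_union, Metric.mem_ball, dist_eq_norm, sub_zero, not_or, not_lt] at hout
    exact hnot z hout.1 hout.2 hz

theorem stmt6 {A : Type*} [NormedRing A] [NormedAlgebra ℂ A] [CompleteSpace A]
    (a : A) (r : ℝ) (h : ‖a ^ 2 - a‖ < 1/4)
    (hr1 : 2 * ‖a ^ 2 - a‖ < r) (hr2 : r < 1/2) :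
    (∀ z : ℂ, (‖z‖ = r ∨ ‖z - 1‖ = r) →
        IsUnit (algebraMap ℂ A z - a)) ∧
      spectrum ℂ a ⊆ Metric.ball (0 : ℂ) r ∪ Metric.ball (1 : ℂ) r :=
  stmt6_general a r hr1 hr2
end

section
/- Let a be a self-adjoint element of a finite-dimensional C*-algebra (e.g. a self-adjoint n×n complex matrix) and let q = χ_{[1/2,∞)}(a) be the spectral projection via continuous functional calculus. Then for every p ∈ [1, ∞), ‖a − q‖_p ≤ 2‖a² − a‖_p, where ‖·‖_p is the unnormalized Schatten p-norm. -/
/-!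
With `χ` the indicator of `[1/2, ∞)`, both `a - q = cfc (x - χ x) a` and
`a² - a = cfc (x² - x) a` are functions of `a`. For real `f`, `(cfc f a)ᴴ * cfc f a = cfc (f²) a`
has characteristic polynomial `∏ (X - f(λᵢ)²)`, so the Schatten `p`-norm of `cfc f a` is the
`ℓᵖ` norm of `(f(λᵢ))ᵢ`. The inequality then follows from the scalar bound `|x - χ x| ≤ 2 |x² - x|`.
-/

open scoped ComplexOrder

/-- The unnormalized Schatten `p`-norm of a square complex matrix,
`‖M‖_p = (Tr((M^*M)^{p/2}))^{1/p}`, computed via the eigenvalues of `Mᴴ * M`. -/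
noncomputable def schattenNorm {n : ℕ} (p : ℝ) (M : Matrix (Fin n) (Fin n) ℂ) : ℝ :=
  (∑ i, (((Matrix.posSemidef_conjTranspose_mul_self M).1).eigenvalues i) ^ (p / 2)) ^ (1 / p)

open Matrix Polynomial

namespace Matrix.IsHermitian

variable {𝕜 : Type*} [RCLike 𝕜] {m : Type*} [Fintype m] [DecidableEq m]

lemma sum_comp_eigenvalues_of_charpoly_eq {B : Matrix m m 𝕜} (hB : B.IsHermitian) {c : m → ℝ}
    (hc : B.charpoly = ∏ i, (X - C (c i : 𝕜))) (g : ℝ → ℝ) :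
    ∑ i, g (hB.eigenvalues i) = ∑ i, g (c i) := by
  have hroots : Multiset.map ((RCLike.ofReal : ℝ → 𝕜) ∘ hB.eigenvalues) Finset.univ.val =
      Multiset.map (RCLike.ofReal ∘ c) Finset.univ.val := by
    rw [← hB.roots_charpoly_eq_eigenvalues, hc, roots_prod _ _ (by
      simp [Finset.prod_ne_zero_iff, X_sub_C_ne_zero])]
    simp
  have hmap : Multiset.map hB.eigenvalues Finset.univ.val = Multiset.map c Finset.univ.val := by
    simpa [Multiset.map_map, Function.comp_def] using congrArg (Multiset.map RCLike.re) hroots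
  have hsum := congrArg (fun s => (s.map g).sum) hmap
  simp only [Multiset.map_map] at hsum
  exact hsum

lemma conjTranspose_cfc_mul_cfc {a : Matrix m m 𝕜} (ha : a.IsHermitian) (f : ℝ → ℝ) :
    (cfc f a)ᴴ * cfc f a = cfc (fun x => f x ^ 2) a := by
  have hcont : ContinuousOn f (spectrum ℝ a) := a.finite_real_spectrum.continuousOn f
  rw [← star_eq_conjTranspose, (cfc_predicate f a : IsSelfAdjoint _).star_eq, ← sq]
  exact (cfc_pow f 2 a hcont ha).symm

end Matrix.IsHermitian

lemma schattenNorm_cfc {n : ℕ} {a : Matrix (Fin n) (Fin n) ℂ} (ha : a.IsHermitian)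
    (f : ℝ → ℝ) (p : ℝ) :
    schattenNorm p (cfc f a) = (∑ i, |f (ha.eigenvalues i)| ^ p) ^ (1 / p) := by
  have hc : ((cfc f a)ᴴ * cfc f a).charpoly =
      ∏ i, (X - C ((f (ha.eigenvalues i) ^ 2 : ℝ) : ℂ)) := by
    rw [ha.conjTranspose_cfc_mul_cfc, ha.charpoly_cfc_eq]
    rfl
  unfold schattenNorm
  rw [IsHermitian.sum_comp_eigenvalues_of_charpoly_eq _ hc (fun x => x ^ (p / 2))]
  have hsq (x : ℝ) : (x ^ 2) ^ (p / 2) = |x| ^ p := by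
    rw [← sq_abs, ← Real.rpow_natCast, ← Real.rpow_mul (abs_nonneg _), Nat.cast_ofNat,
      mul_div_cancel₀ p two_ne_zero]
  exact congrArg (· ^ (1 / p)) (Finset.sum_congr rfl fun i _ => hsq _)

lemma abs_sub_ite_le_two_mul_abs_sq_sub (x : ℝ) :
    |x - if 1 / 2 ≤ x then 1 else 0| ≤ 2 * |x ^ 2 - x| := by
  rw [show x ^ 2 - x = x * (x - 1) by ring, abs_mul]
  split_ifs with hx
  · rw [abs_of_nonneg (by linarith : 0 ≤ x)]
    nlinarith [abs_nonneg (x - 1)]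
  · rw [sub_zero, abs_of_nonpos (by linarith : x - 1 ≤ 0)]
    nlinarith [abs_nonneg x]

lemma rpow_sum_abs_rpow_le_mul {ι : Type*} (s : Finset ι) {u v : ι → ℝ} {c p : ℝ}
    (hc : 0 ≤ c) (hp : 0 < p) (huv : ∀ i ∈ s, |u i| ≤ c * |v i|) :
    (∑ i ∈ s, |u i| ^ p) ^ (1 / p) ≤ c * (∑ i ∈ s, |v i| ^ p) ^ (1 / p) := by
  have hsum : ∑ i ∈ s, |u i| ^ p ≤ c ^ p * ∑ i ∈ s, |v i| ^ p := by
    rw [Finset.mul_sum]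
    refine Finset.sum_le_sum fun i hi => ?_
    rw [← Real.mul_rpow hc (abs_nonneg _)]
    exact Real.rpow_le_rpow (abs_nonneg _) (huv i hi) hp.le
  calc (∑ i ∈ s, |u i| ^ p) ^ (1 / p) ≤ (c ^ p * ∑ i ∈ s, |v i| ^ p) ^ (1 / p) :=
        Real.rpow_le_rpow (by positivity) hsum (by positivity)
    _ = c * (∑ i ∈ s, |v i| ^ p) ^ (1 / p) := by
        rw [Real.mul_rpow (by positivity) (by positivity), ← Real.rpow_mul hc,
          mul_one_div_cancel hp.ne', Real.rpow_one]

theorem stmt7 {n : ℕ} (a : Matrix (Fin n) (Fin n) ℂ) (ha : a.IsHermitian)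
    (q : Matrix (Fin n) (Fin n) ℂ)
    (hq : q = (ha.eigenvectorUnitary : Matrix (Fin n) (Fin n) ℂ) *
        Matrix.diagonal (fun i => if (1/2 : ℝ) ≤ ha.eigenvalues i then (1 : ℂ) else 0) *
        star (ha.eigenvectorUnitary : Matrix (Fin n) (Fin n) ℂ))
    (p : ℝ) (hp : 1 ≤ p) :
    schattenNorm p (a - q) ≤ 2 * schattenNorm p (a ^ 2 - a) := by
  set χ : ℝ → ℝ := fun x => if 1 / 2 ≤ x then 1 else 0
  have hcont (f : ℝ → ℝ) : ContinuousOn f (spectrum ℝ a) :=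
    a.finite_real_spectrum.continuousOn f
  have hq_cfc : q = cfc χ a := by
    rw [hq, ha.cfc_eq, IsHermitian.cfc, Unitary.conjStarAlgAut_apply]
    congr
    funext i
    simp [χ, apply_ite]
  have h_sub : a - q = cfc (fun x => x - χ x) a := by
    rw [hq_cfc, cfc_sub _ _ a (hcont _) (hcont _), cfc_id' ℝ a]
  have h_sq : a ^ 2 - a = cfc (fun x : ℝ => x ^ 2 - x) a := by
    rw [cfc_sub _ _ a (hcont _) (hcont _), cfc_pow_id a 2, cfc_id' ℝ a]
  rw [h_sub, h_sq, schattenNorm_cfc ha, schattenNorm_cfc ha]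
  exact rpow_sum_abs_rpow_le_mul _ zero_le_two (by linarith)
    fun i _ => abs_sub_ite_le_two_mul_abs_sq_sub _
end

section
/- Let u be a unitary n×n complex matrix, let R = {z ∈ ℂ : Re(z) > 0}, and let v = 2χ_R(u) − 1 be obtained by continuous functional calculus. Then v is a self-adjoint unitary (v² = 1, v* = v) and for every p ∈ [1,∞), ‖u − v‖_p ≤ ‖u² − 1‖_p in the unnormalized Schatten p-norm. -/
open scoped ComplexOrder

/-!
In an orthonormal eigenbasis of `u`, both `u - v` and `u² - 1` are diagonal, with entries
`λ - s` and `λ² - 1 = (λ - s)(λ + s)`, where `s = ±1` is the sign of `Re λ`. Since `s` has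
the sign of `Re λ`, `|λ + s| ≥ |Re λ + s| ≥ 1`, so each singular value of `u - v` is at most
the corresponding one of `u² - 1`.
-/

open Matrix Polynomial

section UnitaryConj

variable {m 𝕜 : Type*} [Fintype m] [DecidableEq m] [RCLike 𝕜] {U : Matrix m m 𝕜}

lemma unitary_conj_diagonal_mul (hU : U ∈ unitaryGroup m 𝕜) (a b : m → 𝕜) :
    (U * diagonal a * star U) * (U * diagonal b * star U) = U * diagonal (a * b) * star U := by
  calc _ = U * (diagonal a * (star U * U) * diagonal b) * star U := by simp only [mul_assoc]
    _ = _ := by rw [Unitary.star_mul_self_of_mem hU, mul_one, diagonal_mul_diagonal]; rfl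

lemma unitary_conj_diagonal_one (hU : U ∈ unitaryGroup m 𝕜) :
    U * diagonal 1 * star U = 1 := by
  rw [Pi.one_def, diagonal_one, mul_one, Unitary.mul_star_self_of_mem hU]

lemma conjTranspose_unitary_conj_diagonal (a : m → 𝕜) :
    (U * diagonal a * star U)ᴴ = U * diagonal (star a) * star U := by
  simp only [star_eq_conjTranspose, conjTranspose_mul, conjTranspose_conjTranspose,
    diagonal_conjTranspose, mul_assoc]

lemma charpoly_unitary_conj_diagonal (hU : U ∈ unitaryGroup m 𝕜) (d : m → 𝕜) :
    (U * diagonal d * star U).charpoly = ∏ i, (X - C (d i)) := by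
  rw [charpoly_mul_comm, ← mul_assoc, Unitary.star_mul_self_of_mem hU, one_mul, charpoly_diagonal]

lemma Matrix.IsHermitian.sum_comp_eigenvalues_eq {β : Type*} [AddCommMonoid β]
    {A : Matrix m m 𝕜} (hA : A.IsHermitian) (hU : U ∈ unitaryGroup m 𝕜) {d : m → 𝕜}
    (hd : A = U * diagonal d * star U) (f : 𝕜 → β) :
    ∑ i, f (hA.eigenvalues i) = ∑ i, f (d i) := by
  have hroots : Multiset.map (RCLike.ofReal ∘ hA.eigenvalues) Finset.univ.val =
      Multiset.map d Finset.univ.val := by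
    rw [← hA.roots_charpoly_eq_eigenvalues, hd, charpoly_unitary_conj_diagonal hU,
      roots_prod _ _ (by simp [Finset.prod_ne_zero_iff, X_sub_C_ne_zero])]
    simp
  calc ∑ i, f (hA.eigenvalues i)
        = ((Finset.univ.val.map (RCLike.ofReal ∘ hA.eigenvalues)).map f).sum := by
          rw [Multiset.map_map]; rfl
    _ = ∑ i, f (d i) := by rw [hroots, Multiset.map_map]; rfl

end UnitaryConj

lemma schattenNorm_unitary_conj_diagonal {n : ℕ} {U : Matrix (Fin n) (Fin n) ℂ}
    (hU : U ∈ unitaryGroup (Fin n) ℂ) (d : Fin n → ℂ) (p : ℝ) :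
    schattenNorm p (U * diagonal d * star U) = (∑ i, ‖d i‖ ^ p) ^ (1 / p) := by
  have hgram : (U * diagonal d * star U)ᴴ * (U * diagonal d * star U) =
      U * diagonal (star d * d) * star U := by
    rw [conjTranspose_unitary_conj_diagonal, unitary_conj_diagonal_mul hU]
  have hsum := (posSemidef_conjTranspose_mul_self _).1.sum_comp_eigenvalues_eq hU hgram
    (fun z => (RCLike.re z) ^ (p / 2))
  simp only [RCLike.ofReal_re] at hsum
  rw [schattenNorm, hsum]
  congr 1
  refine Finset.sum_congr rfl fun i _ => ?_
  rw [Pi.mul_apply, Pi.star_apply, RCLike.star_def, RCLike.conj_mul, ← RCLike.ofReal_pow,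
    RCLike.ofReal_re, ← Real.rpow_natCast, ← Real.rpow_mul (norm_nonneg _)]
  ring_nf

/-- `2 χ_R(z) - 1` for the open right half-plane `R`. -/
noncomputable def reSign (z : ℂ) : ℂ := if 0 < z.re then 1 else -1

lemma reSign_mul_self (z : ℂ) : reSign z * reSign z = 1 := by
  unfold reSign; split_ifs <;> norm_num

lemma star_reSign (z : ℂ) : star (reSign z) = reSign z := by
  unfold reSign; split_ifs <;> simp

lemma one_le_norm_add_reSign (z : ℂ) : 1 ≤ ‖z + reSign z‖ := by
  refine le_trans ?_ (Complex.abs_re_le_norm _)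
  unfold reSign
  split_ifs with h
  · rw [Complex.add_re, Complex.one_re, abs_of_pos (by linarith)]; linarith
  · rw [Complex.add_re, Complex.neg_re, Complex.one_re, abs_of_neg (by linarith)]; linarith

lemma norm_sub_reSign_le (z : ℂ) : ‖z - reSign z‖ ≤ ‖z ^ 2 - 1‖ :=
  calc ‖z - reSign z‖ = ‖z - reSign z‖ * 1 := (mul_one _).symm
    _ ≤ ‖z - reSign z‖ * ‖z + reSign z‖ := by gcongr; exact one_le_norm_add_reSign z
    _ = ‖z ^ 2 - 1‖ := by
      rw [← norm_mul, ← reSign_mul_self z]; ring_nf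

theorem stmt8_general {n : ℕ} (u v : Matrix (Fin n) (Fin n) ℂ)
    (U : Matrix.unitaryGroup (Fin n) ℂ) (lam : Fin n → ℂ)
    (hdiag : u = (U : Matrix (Fin n) (Fin n) ℂ) * Matrix.diagonal lam *
        star (U : Matrix (Fin n) (Fin n) ℂ))
    (hv : v = (U : Matrix (Fin n) (Fin n) ℂ) *
        Matrix.diagonal (fun i => 2 * (if (0 : ℝ) < (lam i).re then (1 : ℂ) else 0) - 1) *
        star (U : Matrix (Fin n) (Fin n) ℂ)) :
    v * v = 1 ∧ v.conjTranspose = v ∧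
      ∀ p : ℝ, 1 ≤ p → schattenNorm p (u - v) ≤ schattenNorm p (u ^ 2 - 1) := by
  have hsign : (fun i => 2 * (if (0 : ℝ) < (lam i).re then (1 : ℂ) else 0) - 1) =
      reSign ∘ lam := by
    funext i; simp only [reSign, Function.comp_apply]; split_ifs <;> norm_num
  rw [hsign] at hv
  set W : Matrix (Fin n) (Fin n) ℂ := (U : Matrix (Fin n) (Fin n) ℂ)
  have hU : W ∈ unitaryGroup (Fin n) ℂ := U.2
  have hsub : u - v = W * diagonal (lam - reSign ∘ lam) * star W := by
    rw [hdiag, hv, ← sub_mul, ← mul_sub, diagonal_sub]; rfl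
  have hsq : u ^ 2 - 1 = W * diagonal (lam ^ 2 - 1) * star W := by
    rw [sq, hdiag, unitary_conj_diagonal_mul hU, ← unitary_conj_diagonal_one hU, ← sq,
      ← sub_mul, ← mul_sub, diagonal_sub]; rfl
  refine ⟨?_, ?_, fun p hp => ?_⟩
  · rw [hv, unitary_conj_diagonal_mul hU, ← unitary_conj_diagonal_one hU]
    congr 3
    exact funext fun i => reSign_mul_self (lam i)
  · rw [hv, conjTranspose_unitary_conj_diagonal]
    congr 3
    exact funext fun i => star_reSign (lam i)
  · rw [hsub, hsq, schattenNorm_unitary_conj_diagonal hU, schattenNorm_unitary_conj_diagonal hU]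
    gcongr with i
    exact norm_sub_reSign_le (lam i)

theorem stmt8 {n : ℕ} (u v : Matrix (Fin n) (Fin n) ℂ)
    (hu : u ∈ Matrix.unitaryGroup (Fin n) ℂ)
    (U : Matrix.unitaryGroup (Fin n) ℂ) (lam : Fin n → ℂ)
    (hdiag : u = (U : Matrix (Fin n) (Fin n) ℂ) * Matrix.diagonal lam *
        star (U : Matrix (Fin n) (Fin n) ℂ))
    (hv : v = (U : Matrix (Fin n) (Fin n) ℂ) *
        Matrix.diagonal (fun i => 2 * (if (0 : ℝ) < (lam i).re then (1 : ℂ) else 0) - 1) *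
        star (U : Matrix (Fin n) (Fin n) ℂ)) :
    v * v = 1 ∧ v.conjTranspose = v ∧
      ∀ p : ℝ, 1 ≤ p → schattenNorm p (u - v) ≤ schattenNorm p (u ^ 2 - 1) :=
  stmt8_general u v U lam hdiag hv
end

section
/- Let b_1, …, b_N be n×n complex matrices. Then sqrt(Σ_{i=1}^N |Tr(b_i)|²) ≤ sqrt(N) · Tr((Σ_{i=1}^N b_i* b_i)^{1/2}). -/
/-!
Diagonalise `S = ∑ j, b jᴴ * b j` as `U * diagonal λ * Uᴴ`. For each `i` we have `b iᴴ * b i ≤ S`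
in the Loewner order, so `c = Uᴴ * b i * U` satisfies `cᴴ * c ≤ diagonal λ`; comparing diagonal
entries gives `‖c k k‖ ^ 2 ≤ (cᴴ * c) k k ≤ λ k`, whence
`‖trace (b i)‖ = ‖trace c‖ ≤ ∑ k, √(λ k) = trace √S`. Summing the squares of these `N` bounds
gives the claim.
-/

open scoped ComplexOrder

/-- The positive semidefinite square root, as Mathlib defined it in December 2024 (since removed). -/
noncomputable def Matrix.PosSemidef.sqrt {n 𝕜 : Type*} [Fintype n] [DecidableEq n] [RCLike 𝕜]
    {A : Matrix n n 𝕜} (hA : A.PosSemidef) : Matrix n n 𝕜 :=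
  (hA.1.eigenvectorUnitary : Matrix n n 𝕜) * Matrix.diagonal ((↑) ∘ (Real.sqrt ·) ∘ hA.1.eigenvalues) *
    (star hA.1.eigenvectorUnitary : Matrix n n 𝕜)

open scoped MatrixOrder

theorem Real.sqrt_sum_norm_sq_le_sqrt_card_mul {ι E : Type*} [Fintype ι] [SeminormedAddCommGroup E]
    {f : ι → E} {T : ℝ} (hf : ∀ i, ‖f i‖ ≤ T) :
    √(∑ i, ‖f i‖ ^ 2) ≤ √(Fintype.card ι) * T := by
  rcases isEmpty_or_nonempty ι with _ | ⟨⟨i₀⟩⟩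
  · simp
  have hT : 0 ≤ T := (norm_nonneg _).trans (hf i₀)
  calc √(∑ i, ‖f i‖ ^ 2) ≤ √(∑ _i : ι, T ^ 2) :=
        Real.sqrt_le_sqrt <| Finset.sum_le_sum fun i _ => pow_le_pow_left₀ (norm_nonneg _) (hf i) 2
    _ = √(Fintype.card ι) * T := by
        rw [Finset.sum_const, Finset.card_univ, nsmul_eq_mul, Real.sqrt_mul (Nat.cast_nonneg _),
          Real.sqrt_sq hT]

namespace Matrix

variable {m n 𝕜 : Type*} [Fintype m] [RCLike 𝕜]

lemma re_conjTranspose_mul_self_apply (c : Matrix m n 𝕜) (k : n) :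
    RCLike.re ((cᴴ * c) k k) = ∑ j, ‖c j k‖ ^ 2 := by
  simp only [mul_apply, conjTranspose_apply, RCLike.star_def, RCLike.conj_mul, map_sum]
  norm_cast

lemma norm_sq_le_re_conjTranspose_mul_self_apply (c : Matrix m n 𝕜) (j : m) (k : n) :
    ‖c j k‖ ^ 2 ≤ RCLike.re ((cᴴ * c) k k) := by
  rw [re_conjTranspose_mul_self_apply]
  exact Finset.single_le_sum (fun j _ => sq_nonneg ‖c j k‖) (Finset.mem_univ j)

variable [Fintype n]

lemma norm_apply_self_le_sqrt_of_conjTranspose_mul_self_le_diagonal [DecidableEq n]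
    {c : Matrix n n 𝕜} {d : n → ℝ} (h : cᴴ * c ≤ diagonal (RCLike.ofReal ∘ d)) (k : n) :
    ‖c k k‖ ≤ √(d k) := by
  have hdiag : RCLike.re ((cᴴ * c) k k) ≤ d k := by
    simpa using RCLike.re_le_re ((le_iff.mp h).diag_nonneg (i := k))
  exact Real.le_sqrt_of_sq_le <| (norm_sq_le_re_conjTranspose_mul_self_apply c k k).trans hdiag

lemma trace_conjStarAlgAut {R : Type*} [CommRing R] [StarRing R] [DecidableEq n]
    (u : unitary (Matrix n n R)) (x : Matrix n n R) :
    (Unitary.conjStarAlgAut R _ u x).trace = x.trace := by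
  rw [Unitary.conjStarAlgAut_apply, trace_mul_cycle, Unitary.coe_star_mul_self, one_mul]

lemma PosSemidef.trace_sqrt [DecidableEq n] {A : Matrix n n 𝕜} (hA : A.PosSemidef) :
    hA.sqrt.trace = ∑ k, (√(hA.1.eigenvalues k) : 𝕜) :=
  (trace_conjStarAlgAut hA.1.eigenvectorUnitary _).trans (trace_diagonal _)

lemma norm_trace_le_re_trace_sqrt [DecidableEq n] {S b : Matrix n n 𝕜} (hS : S.PosSemidef)
    (hb : bᴴ * b ≤ S) : ‖b.trace‖ ≤ RCLike.re hS.sqrt.trace := by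
  set φ := Unitary.conjStarAlgAut 𝕜 _ (star hS.1.eigenvectorUnitary)
  have hφb : (φ b)ᴴ * φ b ≤ diagonal (RCLike.ofReal ∘ hS.1.eigenvalues) := by
    rw [← hS.1.conjStarAlgAut_star_eigenvectorUnitary, ← star_eq_conjTranspose, ← map_star,
      ← map_mul]
    exact OrderHomClass.mono φ hb
  calc ‖b.trace‖ = ‖∑ k, φ b k k‖ := by rw [← trace_conjStarAlgAut _ b]; rfl
    _ ≤ ∑ k, ‖φ b k k‖ := norm_sum_le _ _
    _ ≤ ∑ k, √(hS.1.eigenvalues k) := Finset.sum_le_sum fun k _ =>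
        norm_apply_self_le_sqrt_of_conjTranspose_mul_self_le_diagonal hφb k
    _ = RCLike.re hS.sqrt.trace := by simp [hS.trace_sqrt]

end Matrix

theorem stmt13 {n N : ℕ} (b : Fin N → Matrix (Fin n) (Fin n) ℂ)
    (hS : (∑ i, (b i).conjTranspose * b i).PosSemidef) :
    Real.sqrt (∑ i, ‖(b i).trace‖ ^ 2) ≤
      Real.sqrt N * (hS.sqrt).trace.re := by
  have hb : ∀ i, ‖(b i).trace‖ ≤ hS.sqrt.trace.re := fun i =>
    Matrix.norm_trace_le_re_trace_sqrt hS <| Finset.single_le_sum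
      (fun j _ => (Matrix.posSemidef_conjTranspose_mul_self (b j)).nonneg) (Finset.mem_univ i)
  simpa using Real.sqrt_sum_norm_sq_le_sqrt_card_mul hb
end
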